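/- (Existence part of Corollary 1.) If the set of UEs M is finite and the set of SNs P is nonempty, then a two-sided pairwise stable matching η : M → P exists; in particular, any global maximizer of the social welfare Γ over the finite set of matchings is two-sided pairwise stable. -/

import Mathlib

open Finset

/-- The swap matching `η^{m ↔ m'}`: `m` and `m'` exchange serving nodes,
all other UEs keep their serving node. -/
def swapMatch {M P : Type*} [DecidableEq M] (η : M → P) (m m' : M) : M → P :=
  fun z => if z = m then η m' else if z = m' then η m else η z

/-- Utility of UE `x` under matching `η`: sum of pairwise utilities with the
UEs assigned to the same serving node. -/
def ueUtil {M P : Type*} [Fintype M] [DecidableEq P]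
    (u : M → M → ℝ) (η : M → P) (x : M) : ℝ :=
  ∑ z ∈ Finset.univ.filter (fun z => η z = η x), u z x

/-- Utility of SN `p` under matching `η`: sum of utilities of its associated UEs. -/
def snUtil {M P : Type*} [Fintype M] [DecidableEq P]
    (u : M → M → ℝ) (η : M → P) (p : P) : ℝ :=
  ∑ x ∈ Finset.univ.filter (fun x => η x = p), ueUtil u η x

/-- Social welfare: sum of utilities of all UEs. -/
def welfare {M P : Type*} [Fintype M] [DecidableEq P]
    (u : M → M → ℝ) (η : M → P) : ℝ :=
  ∑ x : M, ueUtil u η x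

/-- Two-sided pairwise stability: no pair of distinct UEs can swap so that all
four involved players weakly improve, with at least one strict improvement. -/
def TwoSidedStable {M P : Type*} [Fintype M] [DecidableEq M] [DecidableEq P]
    (u : M → M → ℝ) (η : M → P) : Prop :=
  ¬ ∃ m m' : M, m ≠ m' ∧
    ueUtil u (swapMatch η m m') m ≥ ueUtil u η m ∧
    ueUtil u (swapMatch η m m') m' ≥ ueUtil u η m' ∧
    snUtil u (swapMatch η m m') (η m) ≥ snUtil u η (η m) ∧
    snUtil u (swapMatch η m m') (η m') ≥ snUtil u η (η m') ∧
    (ueUtil u (swapMatch η m m') m > ueUtil u η m ∨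
     ueUtil u (swapMatch η m m') m' > ueUtil u η m' ∨
     snUtil u (swapMatch η m m') (η m) > snUtil u η (η m) ∨
     snUtil u (swapMatch η m m') (η m') > snUtil u η (η m'))


/-!
A swap between UEs served by two different SNs `p = η m` and `p' = η m'` replaces `m'` by `m`
in the cluster of `p'`. Since `u` is symmetric with zero diagonal, the pairwise sum of a
cluster grows by `2 ∑_{z ∈ C} u z a` when `a` joins `C`, so the utility of `p'` changes by
twice the difference between the utility of `m` after the swap and that of `m'` before it;
likewise for `p`. The welfare is the sum of the SN utilities and only those of `p` and `p'`
change, so a blocking swap strictly increases the welfare: a welfare maximizer is stable.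
A maximizer exists because the welfare only depends on which pairs of UEs share an SN, so it
takes finitely many values.
-/

section ClusterSum

variable {M : Type*} (u : M → M → ℝ)

def clusterSum (C : Finset M) : ℝ := ∑ x ∈ C, ∑ z ∈ C, u z x

theorem clusterSum_insert [DecidableEq M] (hsymm : ∀ z y, u z y = u y z)
    (hdiag : ∀ z, u z z = 0) {a : M} {C : Finset M} (ha : a ∉ C) :
    clusterSum u (insert a C) = clusterSum u C + 2 * ∑ z ∈ C, u z a := by
  have hrow : ∑ x ∈ C, u a x = ∑ z ∈ C, u z a := sum_congr rfl fun x _ => hsymm a x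
  simp only [clusterSum, sum_insert ha, hdiag, zero_add, sum_add_distrib, hrow]
  ring

end ClusterSum

section Welfare

variable {M P : Type*} [Fintype M] [DecidableEq P] (u : M → M → ℝ)

theorem snUtil_eq_clusterSum (θ : M → P) (p : P) :
    snUtil u θ p = clusterSum u {x | θ x = p} := by
  refine sum_congr rfl fun x hx => ?_
  rw [ueUtil, (mem_filter.1 hx).2]

theorem snUtil_congr_fiber {θ η : M → P} {p : P} (h : ∀ x, θ x = p ↔ η x = p) :
    snUtil u θ p = snUtil u η p := by
  rw [snUtil_eq_clusterSum, snUtil_eq_clusterSum, filter_congr fun x _ => h x]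

theorem welfare_eq_sum_snUtil (θ : M → P) {s : Finset P} (hs : ∀ x, θ x ∈ s) :
    welfare u θ = ∑ p ∈ s, snUtil u θ p :=
  (sum_fiberwise_of_maps_to (fun x _ => hs x) _).symm

theorem welfare_sub_welfare {θ η : M → P} {p q : P} (hpq : p ≠ q)
    (hfiber : ∀ r, r ≠ p → r ≠ q → ∀ x, θ x = r ↔ η x = r) :
    welfare u θ - welfare u η =
      (snUtil u θ p - snUtil u η p) + (snUtil u θ q - snUtil u η q) := by
  classical
  set s : Finset P := univ.image θ ∪ univ.image η ∪ {p, q}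
  rw [welfare_eq_sum_snUtil u θ (s := s) (by simp [s]),
    welfare_eq_sum_snUtil u η (s := s) (by simp [s]), ← sum_sub_distrib]
  refine sum_eq_add_of_mem p q (by simp [s]) (by simp [s]) hpq fun r _ hr => ?_
  rw [snUtil_congr_fiber u (hfiber r hr.1 hr.2), sub_self]

theorem welfare_eq_sum_ite (θ : M → P) :
    welfare u θ = ∑ x, ∑ z, if θ z = θ x then u z x else 0 :=
  sum_congr rfl fun _ _ => sum_filter _ _

/-- The welfare factors through the finite type of relations `M → M → Bool`, via
"served by the same SN". -/
theorem exists_forall_welfare_le [Nonempty P] :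
    ∃ η : M → P, ∀ θ : M → P, welfare u θ ≤ welfare u η := by
  obtain ⟨_, ⟨η, rfl⟩, hη⟩ := Set.exists_max_image
    (Set.range fun (θ : M → P) (z x : M) => decide (θ z = θ x))
    (fun R : M → M → Bool => ∑ x, ∑ z, if R z x then u z x else 0)
    (Set.toFinite _) (Set.range_nonempty _)
  exact ⟨η, fun θ => by simpa [welfare_eq_sum_ite] using hη _ ⟨θ, rfl⟩⟩

end Welfare

section Swap

variable {M P : Type*} [DecidableEq M] (η : M → P) (m m' : M)

@[simp]
theorem swapMatch_apply_left : swapMatch η m m' m = η m' := by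
  simp [swapMatch]

@[simp]
theorem swapMatch_apply_right : swapMatch η m m' m' = η m := by
  by_cases h : m' = m <;> simp [swapMatch, h]

theorem swapMatch_apply_of_ne {z : M} (hm : z ≠ m) (hm' : z ≠ m') :
    swapMatch η m m' z = η z := by
  simp [swapMatch, hm, hm']

theorem swapMatch_comm : swapMatch η m m' = swapMatch η m' m := by
  funext z
  by_cases hm : z = m
  · simp [hm]
  by_cases hm' : z = m'
  · simp [hm']
  rw [swapMatch_apply_of_ne η m m' hm hm', swapMatch_apply_of_ne η m' m hm' hm]

theorem swapMatch_of_apply_eq (h : η m = η m') : swapMatch η m m' = η := by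
  funext z
  by_cases hm : z = m
  · simp [hm, h]
  by_cases hm' : z = m'
  · simp [hm', h]
  exact swapMatch_apply_of_ne η m m' hm hm'

theorem swapMatch_apply_eq_iff {r : P} (hm : r ≠ η m) (hm' : r ≠ η m') (z : M) :
    swapMatch η m m' z = r ↔ η z = r := by
  by_cases hzm : z = m
  · subst hzm
    simp [Ne.symm hm, Ne.symm hm']
  by_cases hzm' : z = m'
  · subst hzm'
    simp [Ne.symm hm, Ne.symm hm']
  rw [swapMatch_apply_of_ne η m m' hzm hzm']

theorem filter_swapMatch_eq [Fintype M] [DecidableEq P] (hpq : η m ≠ η m') :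
    ({x | swapMatch η m m' x = η m'} : Finset M) =
      insert m (({x | η x = η m'} : Finset M).erase m') := by
  ext x
  by_cases hm : x = m
  · simp [hm]
  by_cases hm' : x = m'
  · subst hm'
    simp [hpq, hm]
  simp [swapMatch_apply_of_ne η m m' hm hm', hm, hm']

end Swap

section SwapUtilities

variable {M P : Type*} [Fintype M] [DecidableEq M] [DecidableEq P] (u : M → M → ℝ)
  (hsymm : ∀ z y, u z y = u y z) (hdiag : ∀ z, u z z = 0) {η : M → P} {m m' : M}
include hsymm hdiag

theorem snUtil_swapMatch_right (hpq : η m ≠ η m') :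
    snUtil u (swapMatch η m m') (η m') =
      snUtil u η (η m') + 2 * (ueUtil u (swapMatch η m m') m - ueUtil u η m') := by
  set C : Finset M := ({x | η x = η m'} : Finset M).erase m'
  have hm'C : m' ∉ C := notMem_erase _ _
  have hmC : m ∉ C := fun h => hpq (mem_filter.1 (mem_of_mem_erase h)).2
  have hfiber : ({x | η x = η m'} : Finset M) = insert m' C := (insert_erase (by simp)).symm
  have hfiber' : ({x | swapMatch η m m' x = η m'} : Finset M) = insert m C :=
    filter_swapMatch_eq η m m' hpq
  have hm : ueUtil u (swapMatch η m m') m = ∑ z ∈ C, u z m := by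
    rw [ueUtil, swapMatch_apply_left, hfiber', sum_insert hmC, hdiag, zero_add]
  have hm' : ueUtil u η m' = ∑ z ∈ C, u z m' := by
    rw [ueUtil, hfiber, sum_insert hm'C, hdiag, zero_add]
  rw [snUtil_eq_clusterSum, snUtil_eq_clusterSum, hfiber', hfiber,
    clusterSum_insert u hsymm hdiag hmC, clusterSum_insert u hsymm hdiag hm'C, hm, hm']
  ring

theorem snUtil_swapMatch_left (hpq : η m ≠ η m') :
    snUtil u (swapMatch η m m') (η m) =
      snUtil u η (η m) + 2 * (ueUtil u (swapMatch η m m') m' - ueUtil u η m) := by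
  rw [swapMatch_comm]
  exact snUtil_swapMatch_right u hsymm hdiag hpq.symm

end SwapUtilities

theorem twoSidedStable_of_forall_welfare_le {M P : Type*} [Fintype M] [DecidableEq M]
    [DecidableEq P] (u : M → M → ℝ) (hsymm : ∀ z y, u z y = u y z) (hdiag : ∀ z, u z z = 0)
    {η : M → P} (hmax : ∀ θ : M → P, welfare u θ ≤ welfare u η) : TwoSidedStable u η := by
  rintro ⟨m, m', -, hm, hm', hp, hp', hstrict⟩
  by_cases hpq : η m = η m'
  · rw [swapMatch_of_apply_eq η m m' hpq] at hstrict
    rcases hstrict with h | h | h | h <;> exact h.false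
  have hwelfare := welfare_sub_welfare u hpq fun r hr hr' => swapMatch_apply_eq_iff η m m' hr hr'
  have hleft := snUtil_swapMatch_left u hsymm hdiag hpq
  have hright := snUtil_swapMatch_right u hsymm hdiag hpq
  have hlt : welfare u η < welfare u (swapMatch η m m') := by
    rcases hstrict with h | h | h | h <;> linarith
  exact (hmax _).not_gt hlt

/-- existence part of Corollary 1: a two-sided pairwise stable
matching exists; in particular, any global maximizer of the social welfare is
two-sided pairwise stable. -/
theorem exists_twoSidedStable {M P : Type*} [Fintype M] [DecidableEq M] [DecidableEq P]
    [Nonempty P]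
    (u : M → M → ℝ) (hsymm : ∀ z y, u z y = u y z) (hdiag : ∀ z, u z z = 0) :
    (∃ η : M → P, TwoSidedStable u η) ∧
      ∀ η : M → P, (∀ θ : M → P, welfare u θ ≤ welfare u η) → TwoSidedStable u η := by
  obtain ⟨η, hη⟩ := exists_forall_welfare_le (P := P) u
  exact ⟨⟨η, twoSidedStable_of_forall_welfare_le u hsymm hdiag hη⟩,
    fun _ => twoSidedStable_of_forall_welfare_le u hsymm hdiag⟩
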